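/- Let r ≥ 1 be an integer, p, q nonzero complex numbers with |p| < 1, |q| < 1, σ, τ ∈ ℂ with σ² = pq, τ² = p/q and στ = p, and m ∈ ℤ. For every nonzero z ∈ ℂ that is not a pole of either factor, Γ^{(r)}(z, m; p,q) · Γ^{(r)}(pq z^{-1}, −m; p,q) = 1, where both rarefied elliptic gamma functions are formed with the same σ, τ. In particular Γ^{(r)}(σ, 0; p,q) = 1. -/

import Mathlib

open Complex Finset

noncomputable section

/-- The infinite q-Pochhammer symbol `(z;p)_∞ = ∏_{j≥0} (1 - z p^j)`. -/
def qPochInf (z p : ℂ) : ℂ := ∏' j : ℕ, (1 - z * p ^ j)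

/-- The theta function `θ(z;p) = (z;p)_∞ (p z⁻¹; p)_∞`. -/
def theta0 (z p : ℂ) : ℂ := qPochInf z p * qPochInf (p * z⁻¹) p

/-- The elliptic gamma function `Γ(z;p,q)`. -/
def ellGamma (z p q : ℂ) : ℂ :=
  ∏' jk : ℕ × ℕ,
    (1 - z⁻¹ * p ^ (jk.1 + 1) * q ^ (jk.2 + 1)) / (1 - z * p ^ jk.1 * q ^ jk.2)

/-- The second order elliptic gamma function `Γ(z;p,q,t)`. -/
def ellGamma3 (z p q t : ℂ) : ℂ :=
  ∏' x : ℕ × ℕ × ℕ,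
    (1 - z * p ^ x.1 * q ^ x.2.1 * t ^ x.2.2) *
      (1 - z⁻¹ * p ^ (x.1 + 1) * q ^ (x.2.1 + 1) * t ^ (x.2.2 + 1))

/-- The lens space elliptic gamma function `γ^{(r)}(z,m;p,q)`. -/
def lensGamma (r : ℕ) (z : ℂ) (m : ℤ) (p q : ℂ) : ℂ :=
  ellGamma (z * p ^ m) (p ^ r) (p * q) * ellGamma (z * q ^ ((r : ℤ) - m)) (q ^ r) (p * q)

/-- The rarefied elliptic gamma function `Γ^{(r)}(z,m;p,q)`, built with fixed
square roots σ, τ satisfying `σ² = pq`, `τ² = p/q`, `στ = p`. -/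
def rarGamma (r : ℕ) (z : ℂ) (m : ℤ) (p q σ τ : ℂ) : ℂ :=
  (-z / σ) ^ (m * (m - 1) / 2) * τ ^ (m * (m - 1) * (2 * m - 1) / 6) * lensGamma r z m p q

/-- `w` avoids the pole set `{P^{-j} Q^{-k} : j,k ≥ 0}` of `ellGamma w P Q`. -/
def notPole (w P Q : ℂ) : Prop := ∀ j k : ℕ, w ≠ P ^ (-(j : ℤ)) * Q ^ (-(k : ℤ))

/-- `z` is not a pole of either elliptic gamma factor of `lensGamma r z m p q`. -/
def lensReg (r : ℕ) (z : ℂ) (m : ℤ) (p q : ℂ) : Prop :=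
  notPole (z * p ^ m) (p ^ r) (p * q) ∧ notPole (z * q ^ ((r : ℤ) - m)) (q ^ r) (p * q)

/-!
Away from its poles `Γ(z;P,Q) = (PQ/z;P,Q)_∞ / (z;P,Q)_∞`, where `(z;P,Q)_∞ = qPochInf₂ z P Q`,
and `(z;P,Q)_∞ = (z;Q)_∞ (zP;P,Q)_∞`. With `Q = pq`, `w = z p^m` and `u = z q^{r-m}`, the two
pairs of factors of `γ^{(r)}(z,m) γ^{(r)}(Q/z,-m)` therefore telescope to
`Γ(w;p^r,Q) Γ(Q/w;p^r,Q) = θ(w;Q)⁻¹` and `Γ(u;q^r,Q) Γ(q^{2r}Q/u;q^r,Q) = θ(z q^{-m};Q)`.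
As `w = Q^m z q^{-m}`, the quasi-periodicity `θ(Qx;Q) = -x⁻¹ θ(x;Q)` leaves the monomial
`(-z q^{-m})^m Q^{m(m-1)/2}`, which the prefactors of the rarefied gamma functions cancel once
`σ² = pq` and `στ = p`. At `(σ, 0)` the same telescoping gives `(σ;Q)_∞⁻¹ (σ;Q)_∞`.
-/

section InfiniteProducts

variable {ι R : Type*} [NormedCommRing R] [NormOneClass R] [CompleteSpace R] {f : ι → R}

lemma multipliable_one_sub_of_summable_norm (hf : Summable (‖f ·‖)) :
    Multipliable fun i ↦ 1 - f i := by
  simpa [sub_eq_add_neg] using multipliable_one_add_of_summable (f := -f) (by simpa using hf)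

lemma tprod_one_sub_ne_zero_of_summable_norm [NormMulClass R] (h0 : ∀ i, 1 - f i ≠ 0)
    (hf : Summable (‖f ·‖)) : ∏' i, (1 - f i) ≠ 0 := by
  simpa [sub_eq_add_neg] using
    tprod_one_add_ne_zero_of_summable (f := -f) (by simpa [sub_eq_add_neg] using h0)
      (by simpa using hf)

end InfiniteProducts

section Norms

variable {R : Type*} [SeminormedRing R] {x y : R}

lemma norm_pow_lt_one (hx : ‖x‖ < 1) {n : ℕ} (hn : n ≠ 0) : ‖x ^ n‖ < 1 :=
  (norm_pow_le' x (Nat.pos_of_ne_zero hn)).trans_lt (pow_lt_one₀ (norm_nonneg _) hx hn)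

lemma norm_mul_lt_one (hx : ‖x‖ < 1) (hy : ‖y‖ < 1) : ‖x * y‖ < 1 :=
  (norm_mul_le x y).trans_lt (mul_lt_one_of_nonneg_of_lt_one_left (norm_nonneg _) hx hy.le)

end Norms

def qPochInf₂ (c P Q : ℂ) : ℂ := ∏' jk : ℕ × ℕ, (1 - c * P ^ jk.1 * Q ^ jk.2)

section Pochhammer

variable {P Q : ℂ}

lemma summable_norm_mul_pow (hQ : ‖Q‖ < 1) (c : ℂ) : Summable fun k : ℕ ↦ ‖c * Q ^ k‖ := by
  simpa [norm_mul, norm_pow] using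
    (summable_geometric_of_lt_one (norm_nonneg Q) hQ).mul_left ‖c‖

lemma summable_norm_mul_pow_mul_pow (hP : ‖P‖ < 1) (hQ : ‖Q‖ < 1) (c : ℂ) :
    Summable fun jk : ℕ × ℕ ↦ ‖c * P ^ jk.1 * Q ^ jk.2‖ :=
  (summable_norm_mul_pow hP c).mul_norm (summable_norm_mul_pow hQ 1 |>.congr fun k ↦ by simp)

lemma multipliable_one_sub_mul_pow (hQ : ‖Q‖ < 1) (c : ℂ) :
    Multipliable fun k : ℕ ↦ 1 - c * Q ^ k :=
  multipliable_one_sub_of_summable_norm (summable_norm_mul_pow hQ c)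

lemma multipliable_one_sub_mul_pow_mul_pow (hP : ‖P‖ < 1) (hQ : ‖Q‖ < 1) (c : ℂ) :
    Multipliable fun jk : ℕ × ℕ ↦ 1 - c * P ^ jk.1 * Q ^ jk.2 :=
  multipliable_one_sub_of_summable_norm (summable_norm_mul_pow_mul_pow hP hQ c)

lemma qPochInf_eq_one_sub_mul (hQ : ‖Q‖ < 1) (c : ℂ) :
    qPochInf c Q = (1 - c) * qPochInf (c * Q) Q := by
  rw [qPochInf, tprod_eq_zero_mul' ((multipliable_one_sub_mul_pow hQ (c * Q)).congr
    fun k ↦ by ring), pow_zero, mul_one, qPochInf]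
  congr 1
  exact tprod_congr fun k ↦ by ring

lemma qPochInf₂_ne_zero {c : ℂ} (hP : ‖P‖ < 1) (hQ : ‖Q‖ < 1)
    (h0 : ∀ j k : ℕ, 1 - c * P ^ j * Q ^ k ≠ 0) : qPochInf₂ c P Q ≠ 0 :=
  tprod_one_sub_ne_zero_of_summable_norm (fun jk ↦ h0 jk.1 jk.2)
    (summable_norm_mul_pow_mul_pow hP hQ c)

lemma qPochInf₂_ne_zero_of_norm_lt_one {c : ℂ} (hc : ‖c‖ < 1) (hP : ‖P‖ < 1) (hQ : ‖Q‖ < 1) :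
    qPochInf₂ c P Q ≠ 0 := by
  refine qPochInf₂_ne_zero hP hQ fun j k h ↦ ?_
  have hlt : ‖c * P ^ j * Q ^ k‖ < 1 := by
    rw [norm_mul, norm_mul, norm_pow, norm_pow]
    calc ‖c‖ * ‖P‖ ^ j * ‖Q‖ ^ k ≤ ‖c‖ * 1 * 1 := by
          gcongr
          exacts [pow_le_one₀ (norm_nonneg _) hP.le, pow_le_one₀ (norm_nonneg _) hQ.le]
      _ < 1 := by simpa using hc
  rw [← sub_eq_zero.mp h, norm_one] at hlt
  exact hlt.false

lemma notPole.qPochInf₂_ne_zero {w : ℂ} (hP : ‖P‖ < 1) (hQ : ‖Q‖ < 1) (h : notPole w P Q) :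
    qPochInf₂ w P Q ≠ 0 := by
  refine _root_.qPochInf₂_ne_zero hP hQ fun j k hjk ↦ h j k ?_
  rw [zpow_neg, zpow_neg, zpow_natCast, zpow_natCast, ← mul_inv]
  exact eq_inv_of_mul_eq_one_left (by linear_combination -hjk)

lemma hasProd_qPochInf_mul_pow (hP : ‖P‖ < 1) (hQ : ‖Q‖ < 1) (c : ℂ) :
    HasProd (fun j : ℕ ↦ qPochInf (c * P ^ j) Q) (qPochInf₂ c P Q) := by
  unfold qPochInf qPochInf₂
  exact (multipliable_one_sub_mul_pow_mul_pow hP hQ c).hasProd.prod_fiberwise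
    fun j ↦ (multipliable_one_sub_mul_pow hQ (c * P ^ j)).hasProd

lemma qPochInf₂_eq_qPochInf_mul (hP : ‖P‖ < 1) (hQ : ‖Q‖ < 1) (c : ℂ) :
    qPochInf₂ c P Q = qPochInf c Q * qPochInf₂ (c * P) P Q := by
  have hshift : (fun j : ℕ ↦ qPochInf (c * P ^ (j + 1)) Q) = fun j ↦ qPochInf (c * P * P ^ j) Q :=
    funext fun j ↦ by rw [pow_succ', mul_assoc]
  rw [← (hasProd_qPochInf_mul_pow hP hQ c).tprod_eq,
    tprod_eq_zero_mul' (hshift ▸ (hasProd_qPochInf_mul_pow hP hQ (c * P)).multipliable), pow_zero,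
    mul_one, hshift, (hasProd_qPochInf_mul_pow hP hQ (c * P)).tprod_eq]

lemma theta0_ne_zero {w : ℂ} (hP : ‖P‖ < 1) (hQ : ‖Q‖ < 1) (hw : qPochInf₂ w P Q ≠ 0)
    (hw' : qPochInf₂ (Q * w⁻¹) P Q ≠ 0) : theta0 w Q ≠ 0 :=
  mul_ne_zero (left_ne_zero_of_mul (qPochInf₂_eq_qPochInf_mul hP hQ w ▸ hw))
    (left_ne_zero_of_mul (qPochInf₂_eq_qPochInf_mul hP hQ _ ▸ hw'))

end Pochhammer

section EllipticGamma

variable {P Q : ℂ}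

lemma ellGamma_eq_div (hP : ‖P‖ < 1) (hQ : ‖Q‖ < 1) {z : ℂ} (hz : qPochInf₂ z P Q ≠ 0) :
    ellGamma z P Q = qPochInf₂ (P * Q * z⁻¹) P Q / qPochInf₂ z P Q := by
  have hnum : ∀ jk : ℕ × ℕ, 1 - z⁻¹ * P ^ (jk.1 + 1) * Q ^ (jk.2 + 1)
      = 1 - P * Q * z⁻¹ * P ^ jk.1 * Q ^ jk.2 := fun jk ↦ by ring
  simp only [ellGamma, hnum]
  exact (multipliable_one_sub_mul_pow_mul_pow hP hQ _).tprod_div₀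
    (multipliable_one_sub_mul_pow_mul_pow hP hQ z) hz

lemma ellGamma_mul_ellGamma_mul_inv (hP : ‖P‖ < 1) (hQ : ‖Q‖ < 1) (hQ0 : Q ≠ 0) {w : ℂ}
    (hw : qPochInf₂ w P Q ≠ 0) (hw' : qPochInf₂ (Q * w⁻¹) P Q ≠ 0) :
    ellGamma w P Q * ellGamma (Q * w⁻¹) P Q = (theta0 w Q)⁻¹ := by
  have hshift := qPochInf₂_eq_qPochInf_mul hP hQ w
  have hshift' := qPochInf₂_eq_qPochInf_mul hP hQ (Q * w⁻¹)
  rw [ellGamma_eq_div hP hQ hw, ellGamma_eq_div hP hQ hw', show P * Q * w⁻¹ = Q * w⁻¹ * P by ring,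
    show P * Q * (Q * w⁻¹)⁻¹ = w * P by field_simp, hshift, hshift', theta0]
  rw [hshift] at hw
  rw [hshift'] at hw'
  generalize qPochInf₂ (w * P) P Q = A at hw ⊢
  generalize qPochInf₂ (Q * w⁻¹ * P) P Q = B at hw' ⊢
  field_simp [right_ne_zero_of_mul hw, right_ne_zero_of_mul hw']

lemma ellGamma_mul_ellGamma_sq_mul_mul_inv (hP : ‖P‖ < 1) (hQ : ‖Q‖ < 1) (hP0 : P ≠ 0)
    (hQ0 : Q ≠ 0) {u : ℂ} (hu : qPochInf₂ u P Q ≠ 0)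
    (hu' : qPochInf₂ (P ^ 2 * Q * u⁻¹) P Q ≠ 0) :
    ellGamma u P Q * ellGamma (P ^ 2 * Q * u⁻¹) P Q = theta0 (u * P⁻¹) Q := by
  have hshift := qPochInf₂_eq_qPochInf_mul hP hQ (u * P⁻¹)
  have hshift' := qPochInf₂_eq_qPochInf_mul hP hQ (P * Q * u⁻¹)
  rw [inv_mul_cancel_right₀ hP0] at hshift
  rw [show P * Q * u⁻¹ * P = P ^ 2 * Q * u⁻¹ by ring] at hshift'
  rw [ellGamma_eq_div hP hQ hu, ellGamma_eq_div hP hQ hu',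
    show P * Q * (P ^ 2 * Q * u⁻¹)⁻¹ = u * P⁻¹ by field_simp, hshift, hshift', theta0,
    show Q * (u * P⁻¹)⁻¹ = P * Q * u⁻¹ by field_simp]
  generalize qPochInf₂ u P Q = A at hu ⊢
  generalize qPochInf₂ (P ^ 2 * Q * u⁻¹) P Q = B at hu' ⊢
  field_simp

lemma ellGamma_of_sq_eq (hP : ‖P‖ < 1) (hQ : ‖Q‖ < 1) {σ : ℂ} (hσ : σ ^ 2 = Q)
    (hD : qPochInf₂ σ P Q ≠ 0) : ellGamma σ P Q = (qPochInf σ Q)⁻¹ := by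
  have hshift := qPochInf₂_eq_qPochInf_mul hP hQ σ
  have harg : P * Q * σ⁻¹ = σ * P := by
    rw [← hσ, sq, mul_assoc, mul_self_mul_inv, mul_comm]
  rw [ellGamma_eq_div hP hQ hD, hshift, harg]
  rw [hshift] at hD
  rw [div_mul_cancel_right₀ (right_ne_zero_of_mul hD)]

lemma ellGamma_mul_of_sq_eq (hP : ‖P‖ < 1) (hQ : ‖Q‖ < 1) (hP0 : P ≠ 0) {σ : ℂ}
    (hσ : σ ^ 2 = Q) (hD : qPochInf₂ (σ * P) P Q ≠ 0) :
    ellGamma (σ * P) P Q = qPochInf σ Q := by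
  have harg : P * Q * (σ * P)⁻¹ = σ := by
    rw [← hσ, mul_inv, sq]
    calc P * (σ * σ) * (σ⁻¹ * P⁻¹) = σ * σ * σ⁻¹ * (P * P⁻¹) := by ring
      _ = σ := by rw [mul_self_mul_inv, mul_inv_cancel₀ hP0, mul_one]
  rw [ellGamma_eq_div hP hQ hD, harg, qPochInf₂_eq_qPochInf_mul hP hQ σ, mul_div_cancel_right₀ _ hD]

end EllipticGamma

section Theta

variable {Q : ℂ}

lemma theta0_mul_left (hQ0 : Q ≠ 0) (hQ : ‖Q‖ < 1) {y : ℂ} (hy : y ≠ 0) :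
    theta0 (Q * y) Q = (-y)⁻¹ * theta0 y Q := by
  rw [theta0, theta0, show Q * (Q * y)⁻¹ = y⁻¹ by field_simp, qPochInf_eq_one_sub_mul hQ y⁻¹,
    qPochInf_eq_one_sub_mul hQ y, mul_comm y⁻¹, mul_comm y]
  field_simp
  ring

lemma theta0_zpow_mul (hQ0 : Q ≠ 0) (hQ : ‖Q‖ < 1) {x : ℂ} (hx : x ≠ 0) (m : ℤ) :
    theta0 (Q ^ m * x) Q = (-x) ^ (-m) * Q ^ (-(m * (m - 1) / 2)) * theta0 x Q := by
  have hx' : -x ≠ 0 := neg_ne_zero.mpr hx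
  have step (n : ℤ) : theta0 (Q ^ (n + 1) * x) Q
        = (-x) ^ (-(n + 1)) * Q ^ (-((n + 1) * (n + 1 - 1) / 2)) * theta0 x Q ↔
      theta0 (Q ^ n * x) Q = (-x) ^ (-n) * Q ^ (-(n * (n - 1) / 2)) * theta0 x Q := by
    have hexp : (n + 1) * (n + 1 - 1) / 2 = n * (n - 1) / 2 + n := by
      rw [← Int.add_mul_ediv_right _ _ two_ne_zero]; ring_nf
    have hfactor : (-x) ^ (-(n + 1)) * Q ^ (-((n + 1) * (n + 1 - 1) / 2))
        = (-(Q ^ n * x))⁻¹ * ((-x) ^ (-n) * Q ^ (-(n * (n - 1) / 2))) := by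
      simp only [hexp, neg_add, zpow_add₀ hx', zpow_add₀ hQ0, neg_mul_eq_mul_neg, mul_inv,
        zpow_neg, zpow_one]
      ring
    rw [zpow_add_one₀ hQ0, mul_comm _ Q, mul_assoc,
      theta0_mul_left hQ0 hQ (mul_ne_zero (zpow_ne_zero _ hQ0) hx), hfactor, mul_assoc,
      mul_right_inj' (inv_ne_zero (neg_ne_zero.mpr (mul_ne_zero (zpow_ne_zero _ hQ0) hx)))]
  induction m using Int.induction_on with
  | zero => simp
  | succ n ih => exact (step n).2 ih
  | pred n ih => exact (step (-n - 1)).1 (by rwa [sub_add_cancel])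

end Theta

lemma lensGamma_mul_lensGamma_inv_eq {r : ℕ} (hr : r ≠ 0) {p q : ℂ} (hp : p ≠ 0) (hq : q ≠ 0)
    (hp1 : ‖p‖ < 1) (hq1 : ‖q‖ < 1) {m : ℤ} {z : ℂ}
    (hreg : lensReg r z m p q) (hreg' : lensReg r (p * q * z⁻¹) (-m) p q) :
    lensGamma r z m p q * lensGamma r (p * q * z⁻¹) (-m) p q
      = (theta0 (z * p ^ m) (p * q))⁻¹ * theta0 (z * q ^ (-m)) (p * q) := by
  have hpr := norm_pow_lt_one hp1 hr
  have hqr := norm_pow_lt_one hq1 hr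
  have hpq := norm_mul_lt_one hp1 hq1
  obtain ⟨hw, hu⟩ := hreg
  obtain ⟨hw', hu'⟩ := hreg'
  set w := z * p ^ m
  set u := z * q ^ ((r : ℤ) - m)
  have harg_w : p * q * z⁻¹ * p ^ (-m) = p * q * w⁻¹ := by
    rw [mul_inv, zpow_neg]; ring
  have harg_u : p * q * z⁻¹ * q ^ ((r : ℤ) - -m) = (q ^ r) ^ 2 * (p * q) * u⁻¹ := by
    have hsq : (q ^ r) ^ 2 = q ^ (2 * (r : ℤ)) := by
      rw [← pow_mul, ← zpow_natCast]; push_cast; ring_nf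
    rw [hsq, mul_inv, ← zpow_neg, show (r : ℤ) - -m = 2 * r + -(r - m) by ring, zpow_add₀ hq]
    ring
  have hux : u * (q ^ r)⁻¹ = z * q ^ (-m) := by
    rw [← zpow_natCast, ← zpow_neg, mul_assoc, ← zpow_add₀ hq, show (r : ℤ) - m + -r = -m by ring]
  rw [harg_w] at hw'
  rw [harg_u] at hu'
  calc lensGamma r z m p q * lensGamma r (p * q * z⁻¹) (-m) p q
      = (ellGamma w (p ^ r) (p * q) * ellGamma (p * q * w⁻¹) (p ^ r) (p * q)) *
          (ellGamma u (q ^ r) (p * q) * ellGamma ((q ^ r) ^ 2 * (p * q) * u⁻¹) (q ^ r) (p * q)) := by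
        rw [lensGamma, lensGamma, harg_w, harg_u]; ring
    _ = (theta0 w (p * q))⁻¹ * theta0 (z * q ^ (-m)) (p * q) := by
        rw [ellGamma_mul_ellGamma_mul_inv hpr hpq (mul_ne_zero hp hq)
          (hw.qPochInf₂_ne_zero hpr hpq) (hw'.qPochInf₂_ne_zero hpr hpq),
          ellGamma_mul_ellGamma_sq_mul_mul_inv hqr hpq (pow_ne_zero _ hq) (mul_ne_zero hp hq)
          (hu.qPochInf₂_ne_zero hqr hpq) (hu'.qPochInf₂_ne_zero hqr hpq), hux]

lemma lensReg.theta0_ne_zero {r : ℕ} (hr : r ≠ 0) {p q : ℂ} (hp1 : ‖p‖ < 1) (hq1 : ‖q‖ < 1)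
    {m : ℤ} {z : ℂ} (hreg : lensReg r z m p q) (hreg' : lensReg r (p * q * z⁻¹) (-m) p q) :
    theta0 (z * p ^ m) (p * q) ≠ 0 := by
  have hpr := norm_pow_lt_one hp1 hr
  have hpq := norm_mul_lt_one hp1 hq1
  have harg_w : p * q * z⁻¹ * p ^ (-m) = p * q * (z * p ^ m)⁻¹ := by
    rw [mul_inv, zpow_neg]; ring
  exact _root_.theta0_ne_zero hpr hpq (hreg.1.qPochInf₂_ne_zero hpr hpq)
    (harg_w ▸ hreg'.1.qPochInf₂_ne_zero hpr hpq)

lemma lensGamma_mul_lensGamma_inv {r : ℕ} (hr : r ≠ 0) {p q : ℂ} (hp : p ≠ 0) (hq : q ≠ 0)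
    (hp1 : ‖p‖ < 1) (hq1 : ‖q‖ < 1) {m : ℤ} {z : ℂ} (hz : z ≠ 0)
    (hreg : lensReg r z m p q) (hreg' : lensReg r (p * q * z⁻¹) (-m) p q) :
    lensGamma r z m p q * lensGamma r (p * q * z⁻¹) (-m) p q
      = (-(z * q ^ (-m))) ^ m * (p * q) ^ (m * (m - 1) / 2) := by
  have hwx : z * p ^ m = (p * q) ^ m * (z * q ^ (-m)) := by
    have hcancel : q ^ m * q ^ (-m) = 1 := by rw [← zpow_add₀ hq, add_neg_cancel, zpow_zero]
    rw [mul_zpow]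
    linear_combination (-(z * p ^ m)) * hcancel
  have hθ := theta0_zpow_mul (mul_ne_zero hp hq) (norm_mul_lt_one hp1 hq1)
    (mul_ne_zero hz (zpow_ne_zero (-m) hq)) m
  rw [← hwx] at hθ
  have hθx : theta0 (z * q ^ (-m)) (p * q) ≠ 0 :=
    right_ne_zero_of_mul (hθ ▸ hreg.theta0_ne_zero hr hp1 hq1 hreg')
  rw [lensGamma_mul_lensGamma_inv_eq hr hp hq hp1 hq1 hreg hreg', hθ, mul_inv, mul_inv, mul_assoc,
    inv_mul_cancel₀ hθx, mul_one, ← zpow_neg, ← zpow_neg, neg_neg, neg_neg]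

lemma six_dvd_mul_sub_one_mul_two_mul_sub_one (m : ℤ) : 6 ∣ m * (m - 1) * (2 * m - 1) := by
  refine (ZMod.intCast_zmod_eq_zero_iff_dvd _ 6).1 ?_
  push_cast
  generalize (m : ZMod 6) = x
  revert x
  decide

lemma rarGamma_mul_rarGamma_inv {r : ℕ} {p q σ τ : ℂ} (hσ : σ ^ 2 = p * q)
    (hστ : σ * τ = p) (hσ0 : σ ≠ 0) (hτ0 : τ ≠ 0) {m : ℤ} {z : ℂ} (hz : z ≠ 0) :
    rarGamma r z m p q σ τ * rarGamma r (p * q * z⁻¹) (-m) p q σ τ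
      = ((-(z * q ^ (-m))) ^ m * (p * q) ^ (m * (m - 1) / 2))⁻¹
        * (lensGamma r z m p q * lensGamma r (p * q * z⁻¹) (-m) p q) := by
  have hA0 : -z / σ ≠ 0 := div_ne_zero (neg_ne_zero.mpr hz) hσ0
  have hexp2 : -m * (-m - 1) / 2 = m * (m - 1) / 2 + m := by
    rw [← Int.add_mul_ediv_right _ _ two_ne_zero]; ring_nf
  -- `/` is floor division on `ℤ`; the two quotients add up only because both divisions are exact.
  have hexp6 : m * (m - 1) * (2 * m - 1) / 6 + -m * (-m - 1) * (2 * -m - 1) / 6 = -(m * m) := by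
    obtain ⟨k, hk⟩ := six_dvd_mul_sub_one_mul_two_mul_sub_one m
    rw [hk, show -m * (-m - 1) * (2 * -m - 1) = 6 * (-(m * m) - k) by linear_combination -hk,
      Int.mul_ediv_cancel_left _ (by norm_num), Int.mul_ediv_cancel_left _ (by norm_num)]
    ring
  have hpq : (p * q) ^ (m * (m - 1) / 2) = σ ^ (m * m - m) := by
    rw [← hσ, ← zpow_natCast, ← zpow_mul, Nat.cast_ofNat,
      Int.two_mul_ediv_two_of_even (Int.even_mul_pred_self m)]
    ring_nf
  have hqm : q ^ (-m) = σ ^ (-m) * τ ^ m := by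
    have hqτ : q * τ = σ := mul_left_cancel₀ hσ0 (by linear_combination q * hστ - hσ)
    rw [← hqτ, mul_zpow, zpow_neg τ, inv_mul_cancel_right₀ (zpow_ne_zero _ hτ0)]
  have hxm : (-(z * q ^ (-m))) ^ m = (-z / σ) ^ m * τ ^ (m * m) * (σ ^ m * σ ^ (-(m * m))) := by
    rw [show -(z * q ^ (-m)) = -z / σ * σ * q ^ (-m) by field_simp, hqm, mul_zpow, mul_zpow,
      mul_zpow, ← zpow_mul, ← zpow_mul, neg_mul]
    ring
  have hσpow : σ ^ m * σ ^ (-(m * m)) * σ ^ (m * m - m) = 1 := by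
    rw [← zpow_add₀ hσ0, ← zpow_add₀ hσ0]; ring_nf; exact zpow_zero σ
  have hprefactor : ((-(z * q ^ (-m))) ^ m * (p * q) ^ (m * (m - 1) / 2))⁻¹
      = (-z / σ) ^ (-m) * τ ^ (-(m * m)) := by
    rw [hxm, hpq, mul_assoc _ (σ ^ m * σ ^ (-(m * m))), hσpow, mul_one, mul_inv, zpow_neg, zpow_neg]
  have hAinv : -(p * q * z⁻¹) / σ = (-z / σ)⁻¹ := by rw [← hσ]; field_simp
  have hApow : (-z / σ) ^ (m * (m - 1) / 2) * ((-z / σ)⁻¹) ^ (m * (m - 1) / 2 + m)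
      = (-z / σ) ^ (-m) := by
    rw [inv_zpow', ← zpow_add₀ hA0]; ring_nf
  have hτpow : τ ^ (m * (m - 1) * (2 * m - 1) / 6) * τ ^ (-m * (-m - 1) * (2 * -m - 1) / 6)
      = τ ^ (-(m * m)) := by
    rw [← zpow_add₀ hτ0, hexp6]
  rw [rarGamma, rarGamma, hAinv, hexp2, hprefactor, ← hApow, ← hτpow]
  ring

lemma rarGamma_sqrt_zero {r : ℕ} (hr : r ≠ 0) {p q σ τ : ℂ} (hq : q ≠ 0) (hp1 : ‖p‖ < 1)
    (hq1 : ‖q‖ < 1) (hσ : σ ^ 2 = p * q) : rarGamma r σ 0 p q σ τ = 1 := by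
  have hpr := norm_pow_lt_one hp1 hr
  have hqr := norm_pow_lt_one hq1 hr
  have hpq := norm_mul_lt_one hp1 hq1
  have hσ1 : ‖σ‖ < 1 := by
    rw [← sq_lt_one_iff₀ (norm_nonneg _), ← norm_pow, hσ]; exact hpq
  have hDp := qPochInf₂_ne_zero_of_norm_lt_one hσ1 hpr hpq
  have hDq := qPochInf₂_ne_zero_of_norm_lt_one hσ1 hqr hpq
  rw [qPochInf₂_eq_qPochInf_mul hqr hpq] at hDq
  simp only [rarGamma, lensGamma, mul_zero, zero_mul, Int.zero_ediv, zpow_zero, one_mul, mul_one,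
    sub_zero, zpow_natCast]
  rw [ellGamma_of_sq_eq hpr hpq hσ hDp, ellGamma_mul_of_sq_eq hqr hpq (pow_ne_zero _ hq) hσ
    (right_ne_zero_of_mul hDq), inv_mul_cancel₀ (left_ne_zero_of_mul hDq)]

theorem rarGamma_inversion_and_normalization_general
    (r : ℕ) (hr : 1 ≤ r) (p q σ τ : ℂ) (hp : p ≠ 0) (hq : q ≠ 0)
    (hp1 : ‖p‖ < 1) (hq1 : ‖q‖ < 1)
    (hσ : σ ^ 2 = p * q) (hστ : σ * τ = p)
    (m : ℤ) (z : ℂ) (hz : z ≠ 0)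
    (hreg1 : lensReg r z m p q)
    (hreg2 : lensReg r (p * q * z⁻¹) (-m) p q) :
    rarGamma r z m p q σ τ * rarGamma r (p * q * z⁻¹) (-m) p q σ τ = 1 ∧
      rarGamma r σ 0 p q σ τ = 1 := by
  have hr0 : r ≠ 0 := Nat.one_le_iff_ne_zero.mp hr
  have hσ0 : σ ≠ 0 := by
    rintro rfl
    exact mul_ne_zero hp hq (by simpa using hσ.symm)
  have hτ0 : τ ≠ 0 := by
    rintro rfl
    exact hp (by simpa using hστ.symm)
  refine ⟨?_, rarGamma_sqrt_zero hr0 hq hp1 hq1 hσ⟩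
  rw [rarGamma_mul_rarGamma_inv hσ hστ hσ0 hτ0 hz,
    lensGamma_mul_lensGamma_inv hr0 hp hq hp1 hq1 hz hreg1 hreg2]
  exact inv_mul_cancel₀ (mul_ne_zero (zpow_ne_zero _ (neg_ne_zero.mpr
    (mul_ne_zero hz (zpow_ne_zero _ hq)))) (zpow_ne_zero _ (mul_ne_zero hp hq)))

/-- The inversion relation for the rarefied elliptic gamma function:
`Γ^{(r)}(z,m) Γ^{(r)}(pq/z, −m) = 1`, and the normalization `Γ^{(r)}(σ,0) = 1`. -/
theorem rarGamma_inversion_and_normalization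
    (r : ℕ) (hr : 1 ≤ r) (p q σ τ : ℂ) (hp : p ≠ 0) (hq : q ≠ 0)
    (hp1 : ‖p‖ < 1) (hq1 : ‖q‖ < 1)
    (hσ : σ ^ 2 = p * q) (hτ : τ ^ 2 = p / q) (hστ : σ * τ = p)
    (m : ℤ) (z : ℂ) (hz : z ≠ 0)
    (hreg1 : lensReg r z m p q)
    (hreg2 : lensReg r (p * q * z⁻¹) (-m) p q) :
    rarGamma r z m p q σ τ * rarGamma r (p * q * z⁻¹) (-m) p q σ τ = 1 ∧
      rarGamma r σ 0 p q σ τ = 1 :=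
  rarGamma_inversion_and_normalization_general r hr p q σ τ hp hq hp1 hq1 hσ hστ m z hz hreg1 hreg2
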